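/- Consider a finite Markov game with state set S, action sets A_1,…,A_n, kernel P, reward r, and discount γ ∈ [0,1). Let π be a stochastic action-dependent joint policy associated with an ADG G_d = (N, E_d), and suppose π is G_d-locally optimal, i.e., for every i ∈ N, s ∈ S and a'_{N_d(i)}: E_{π_{-N_d(i)}}[Q^{V^π}(s, a'_{N_d(i)}, a_{-N_d(i)})] = max_{a_i ∈ A_i} E_{π_{-N_d[i]}}[Q^{V^π}(s, a'_{N_d(i)}, a_i, a_{-N_d[i]})]. Let G_c = (N, E_c) be a CG of the function Q^{V^π}. If N_d(i) = N_c(i^{[+]}) for every i ∈ N, then π is globally optimal: V^π = V^*. -/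

import Mathlib

/-- `N_c(S)`: the set of neighbors of a set `S` of vertices in an undirected graph,
excluding `S` itself. -/
def ncSet {n : ℕ} (Gc : SimpleGraph (Fin n)) (S : Set (Fin n)) : Set (Fin n) :=
  (⋃ j ∈ S, Gc.neighborSet j) \ S

/-- `G_c` is a coordination graph (CG) of `Q : S × A → ℝ`: there is a family of local
value functions `q i j`, one for each edge `(i,j) ∈ E_c` (with `i < j`, so each
undirected edge is counted once; the family vanishes off the edges), such that
`Q(s,a) = Σ_{(i,j)∈E_c} q i j (s, a_i, a_j)`. -/
def IsCG {n : ℕ} {St : Type*} {A : Fin n → Type*} (Gc : SimpleGraph (Fin n))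
    (Q : St → (∀ i, A i) → ℝ) : Prop :=
  ∃ q : (i : Fin n) → (j : Fin n) → St → A i → A j → ℝ,
    (∀ i j, ¬(i < j ∧ Gc.Adj i j) → ∀ s ai aj, q i j s ai aj = 0) ∧
    ∀ s a, Q s a = ∑ i, ∑ j, q i j s (a i) (a j)

/-- Combine clamped values `a'` (on the coordinates in `F`) with free values `b`
(on the coordinates outside `F`) into a full joint action. -/
def comb {n : ℕ} {A : Fin n → Type*} (F : Finset (Fin n)) (a' : ∀ i, A i)
    (b : (j : {j : Fin n // j ∉ F}) → A j.1) : ∀ i, A i :=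
  fun m => if h : m ∉ F then b ⟨m, h⟩ else a' m

/-- The clamped expectation `E_{π_{-F}}[f(s, a'_F, a_{-F})]`: the coordinates in `F`
are clamped to the values of `a'`, and the agents outside `F` draw their actions from
their (action-dependent) policies, each `π j` conditioning on the actions of its
in-neighbors `N_d(j) = {k | Ed k j}` in the combined action vector. -/
def clampedExp {n : ℕ} {St : Type*} {A : Fin n → Type*} [∀ i, Fintype (A i)]
    (Ed : Fin n → Fin n → Prop) [DecidableRel Ed]
    (π : (i : Fin n) → St → ((j : {j : Fin n // Ed j i}) → A j.1) → A i → ℝ)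
    (F : Finset (Fin n)) (s : St) (a' : ∀ i, A i)
    (f : (∀ i, A i) → ℝ) : ℝ :=
  ∑ b : (j : {j : Fin n // j ∉ F}) → A j.1,
    (∏ j : {j : Fin n // j ∉ F},
        π j.1 s (fun k => comb F a' b k.1) (b j)) * f (comb F a' b)

/-- `π` is a (stochastic action-dependent) joint policy: each conditional `π i s c`
is a probability distribution on `A i`. -/
def IsPolicy {n : ℕ} {St : Type*} {A : Fin n → Type*} [∀ i, Fintype (A i)]
    (Ed : Fin n → Fin n → Prop)
    (π : (i : Fin n) → St → ((j : {j : Fin n // Ed j i}) → A j.1) → A i → ℝ) : Prop :=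
  ∀ (i : Fin n) (s : St) (c : (j : {j : Fin n // Ed j i}) → A j.1),
    (∀ ai, 0 ≤ π i s c ai) ∧ ∑ ai, π i s c ai = 1

/-- `π` is `G_d`-locally optimal with respect to `Q`: for every agent `i`, state `s`,
and clamped values `a'` on `N_d(i)`,
`E_{π_{-N_d(i)}}[Q(s, a'_{N_d(i)}, a_{-N_d(i)})]
  = max_{a_i} E_{π_{-N_d[i]}}[Q(s, a'_{N_d(i)}, a_i, a_{-N_d[i]})]`. -/
def GdLocallyOpt {n : ℕ} {St : Type*} {A : Fin n → Type*}
    [∀ i, Fintype (A i)] [∀ i, Nonempty (A i)]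
    (Ed : Fin n → Fin n → Prop) [DecidableRel Ed]
    (π : (i : Fin n) → St → ((j : {j : Fin n // Ed j i}) → A j.1) → A i → ℝ)
    (Q : St → (∀ i, A i) → ℝ) : Prop :=
  ∀ (i : Fin n) (s : St) (a' : ∀ j, A j),
    clampedExp Ed π (Finset.univ.filter fun j => Ed j i) s a' (Q s)
      = ⨆ ai : A i, clampedExp Ed π (Finset.univ.filter fun j => Ed j i ∨ j = i) s
          (Function.update a' i ai) (Q s)

/-- The one-step lookahead value `Q^V(s,a) = r(s,a) + γ Σ_{s'} P(s'|s,a) V(s')`. -/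
def QV {n : ℕ} {St : Type*} [Fintype St] {A : Fin n → Type*}
    (P : St → (∀ i, A i) → St → ℝ) (r : St → (∀ i, A i) → ℝ) (γ : ℝ)
    (V : St → ℝ) : St → (∀ i, A i) → ℝ :=
  fun s a => r s a + γ * ∑ s', P s a s' * V s'

/-!
Write `Q^{V^π} = Σ_{i<j} q_{ij}` along the coordination graph and split it, for every `t`, into
the part `Q_{≥t}` of the edges with an endpoint `≥ t` and the part `Q_{<t}` of the edges below `t`.
Since every agent `j ≥ t` reads only `N_d(j) = N_c(j^{[+]}) ⊆ t^{[+]} ∪ N_d(t)`, the expectation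
of `Q_{≥t}` with the agents `< t` clamped involves only the agents `≥ t`, and `Q_{<t}` is blind to
them. Backward induction on `t` shows that this expectation is the maximum of `Q_{≥t}` over the
actions of the agents `≥ t`: local optimality of agent `t` gives the step once the common
contribution of `Q_{<t}` is cancelled from both sides. At `t = 0` this says `V^π = T V^π`, and
the `γ`-contraction `T` has only one fixed point.
-/

open Finset

section Splice

variable {n : ℕ} {A : Fin n → Type*}

def splice (t : ℕ) (a' b : ∀ i, A i) : ∀ i, A i :=
  fun m => if t ≤ m.val then b m else a' m

lemma splice_zero (a' b : ∀ i, A i) : splice 0 a' b = b :=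
  funext fun m => if_pos m.val.zero_le

lemma splice_self (a' b : ∀ i, A i) : splice n a' b = a' :=
  funext fun m => if_neg (not_le.2 m.isLt)

lemma splice_of_lt {t : ℕ} {m : Fin n} (hm : m.val < t) (a' b : ∀ i, A i) :
    splice t a' b m = a' m :=
  if_neg (not_le.2 hm)

lemma splice_succ_update (T : Fin n) (a' b : ∀ i, A i) (x : A T) :
    splice (T.val + 1) (Function.update a' T x) b = splice T.val a' (Function.update b T x) := by
  funext m
  by_cases hm : m = T
  · subst hm
    simp [splice]
  · have hmT : m.val ≠ T.val := fun h => hm (Fin.ext h)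
    simp only [splice, Function.update_of_ne hm]
    split_ifs <;> first | rfl | omega

lemma iSup_splice_succ_update [∀ i, Fintype (A i)] (T : Fin n) (a' : ∀ i, A i)
    (f : (∀ i, A i) → ℝ) :
    ⨆ x, ⨆ b, f (splice (T.val + 1) (Function.update a' T x) b) = ⨆ b, f (splice T.val a' b) := by
  simp_rw [splice_succ_update]
  rw [← ciSup_prod (Set.finite_range _).bddAbove
    (f := fun p : A T × (∀ i, A i) => f (splice T.val a' (Function.update p.2 T p.1)))]
  exact Function.Surjective.iSup_comp (fun b => ⟨(b T, b), Function.update_eq_self T b⟩)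
    (fun b => f (splice T.val a' b))

end Splice

section ClampedExpectation

variable {n : ℕ} {St : Type*} {A : Fin n → Type*}

lemma comb_of_mem {F : Finset (Fin n)} {a' : ∀ i, A i} {b : (j : {j // j ∉ F}) → A j.1}
    {m : Fin n} (h : m ∈ F) : comb F a' b m = a' m :=
  dif_neg (not_not_intro h)

lemma comb_of_notMem {F : Finset (Fin n)} {a' : ∀ i, A i} {b : (j : {j // j ∉ F}) → A j.1}
    {m : Fin n} (h : m ∉ F) : comb F a' b m = b ⟨m, h⟩ :=
  dif_pos h

variable (Ed : Fin n → Fin n → Prop)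
  (π : (i : Fin n) → St → ((j : {j : Fin n // Ed j i}) → A j.1) → A i → ℝ)

open Classical in
noncomputable def clampedWeight (F : Finset (Fin n)) (s : St) (a' a : ∀ i, A i) : ℝ :=
  if ∀ p ∈ F, a p = a' p then ∏ j ∈ Fᶜ, π j s (fun k => a k.1) (a j) else 0

variable [∀ i, Fintype (A i)]

theorem sum_mul_clampedWeight_insert {F : Finset (Fin n)} {m : Fin n} (hm : m ∉ F)
    (hnd : ∀ k, Ed k m → k ∈ F) (s : St) (a' a : ∀ i, A i) :
    ∑ v, π m s (fun k => a' k.1) v * clampedWeight Ed π (insert m F) s (Function.update a' m v) a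
      = clampedWeight Ed π F s a' a := by
  classical
  have hclamp : (∀ p ∈ insert m F, a p = Function.update a' m (a m) p) ↔ ∀ p ∈ F, a p = a' p := by
    rw [forall_mem_insert, Function.update_self]
    refine ⟨fun h p hp => ?_, fun h => ⟨rfl, fun p hp => ?_⟩⟩
    · rw [h.2 p hp, Function.update_of_ne (ne_of_mem_of_not_mem hp hm)]
    · rw [h p hp, Function.update_of_ne (ne_of_mem_of_not_mem hp hm)]
  rw [Fintype.sum_eq_single (a m)]
  · unfold clampedWeight
    by_cases h : ∀ p ∈ F, a p = a' p
    · have hctx : (fun k : {k // Ed k m} => a' k.1) = fun k : {k // Ed k m} => a k.1 :=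
        funext fun k => (h k.1 (hnd k.1 k.2)).symm
      rw [if_pos (hclamp.2 h), if_pos h, hctx,
        ← prod_insert (f := fun j => π j s (fun k => a k.1) (a j)) (by simp), ← compl_erase,
        erase_insert hm]
    · rw [if_neg (mt hclamp.1 h), if_neg h, mul_zero]
  · intro v hv
    rw [clampedWeight, if_neg, mul_zero]
    intro h
    exact hv ((h m (mem_insert_self m F)).trans (Function.update_self m v a')).symm

variable [DecidableRel Ed]

theorem clampedExp_eq_sum_clampedWeight (F : Finset (Fin n)) (s : St) (a' : ∀ i, A i)
    (f : (∀ i, A i) → ℝ) :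
    clampedExp Ed π F s a' f = ∑ a, clampedWeight Ed π F s a' a * f a := by
  classical
  simp only [clampedWeight, ite_mul, zero_mul]
  rw [← sum_filter]
  refine sum_bij' (fun b _ => comb F a' b) (fun a _ j => a j.1) ?_ ?_ ?_ ?_ ?_
  · intro b _
    simpa using fun p hp => comb_of_mem hp
  · intro a _
    exact mem_univ _
  · intro b _
    funext j
    exact comb_of_notMem j.2
  · intro a ha
    funext m
    by_cases hm : m ∈ F
    · rw [comb_of_mem hm, ((mem_filter.1 ha).2 m hm)]
    · rw [comb_of_notMem hm]
  · intro b _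
    rw [prod_subtype Fᶜ (fun _ => mem_compl)
      (fun m => π m s (fun k => comb F a' b k.1) (comb F a' b m))]
    congr 1
    refine prod_congr rfl fun j _ => ?_
    rw [comb_of_notMem j.2]

theorem clampedExp_univ (s : St) (a' : ∀ i, A i) (f : (∀ i, A i) → ℝ) :
    clampedExp Ed π univ s a' f = f a' := by
  rw [clampedExp_eq_sum_clampedWeight, Fintype.sum_eq_single a']
  · simp [clampedWeight]
  · intro a ha
    rw [clampedWeight, if_neg fun h => ha (funext fun p => h p (mem_univ p)), zero_mul]

theorem clampedExp_add (F : Finset (Fin n)) (s : St) (a' : ∀ i, A i) (f g : (∀ i, A i) → ℝ) :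
    clampedExp Ed π F s a' (fun a => f a + g a) =
      clampedExp Ed π F s a' f + clampedExp Ed π F s a' g := by
  simp only [clampedExp, mul_add, sum_add_distrib]

theorem clampedExp_congr {F : Finset (Fin n)} {Δ : Set (Fin n)} {a' a'' : ∀ i, A i}
    (hagree : ∀ k ∉ Δ, a' k = a'' k) (hfree : ∀ j ∉ F, ∀ k, Ed k j → k ∉ Δ)
    {f : (∀ i, A i) → ℝ} (hf : DependsOn f Δᶜ) (s : St) :
    clampedExp Ed π F s a' f = clampedExp Ed π F s a'' f := by
  have hcomb : ∀ b, ∀ k ∉ Δ, comb F a' b k = comb F a'' b k := by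
    intro b k hk
    by_cases hkF : k ∈ F
    · rw [comb_of_mem hkF, comb_of_mem hkF, hagree k hk]
    · rw [comb_of_notMem hkF, comb_of_notMem hkF]
  refine sum_congr rfl fun b _ => ?_
  congr 1
  · refine prod_congr rfl fun j _ => ?_
    congr 1
    funext k
    exact hcomb b k.1 (hfree j.1 j.2 k.1 k.2)
  · exact hf fun k hk => hcomb b k hk

theorem clampedExp_eq_sum_insert {F : Finset (Fin n)} {m : Fin n} (hm : m ∉ F)
    (hnd : ∀ k, Ed k m → k ∈ F) (s : St) (a' : ∀ i, A i) (f : (∀ i, A i) → ℝ) :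
    clampedExp Ed π F s a' f =
      ∑ v, π m s (fun k => a' k.1) v *
        clampedExp Ed π (insert m F) s (Function.update a' m v) f := by
  simp only [clampedExp_eq_sum_clampedWeight, mul_sum]
  rw [sum_comm]
  refine sum_congr rfl fun a _ => ?_
  simp only [← mul_assoc, ← sum_mul, sum_mul_clampedWeight_insert Ed π hm hnd]

/-- The agents of `L` are summed out in increasing order; each contributes a factor
`∑ v, π m s _ v = 1`. -/
theorem clampedExp_eq_clampedExp_union (hπ : IsPolicy Ed π) (hEd : ∀ i j : Fin n, Ed j i → j < i)
    {F L : Finset (Fin n)} (hFL : Disjoint F L) (hfree : ∀ j ∉ F, j ∉ L → ∀ k, Ed k j → k ∉ L)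
    (hL : ∀ j ∈ L, ∀ k, Ed k j → k ∈ F ∨ k ∈ L) {f : (∀ i, A i) → ℝ}
    (hf : DependsOn f {k | k ∉ L}) (s : St) (a' : ∀ i, A i) :
    clampedExp Ed π F s a' f = clampedExp Ed π (F ∪ L) s a' f := by
  induction L using Finset.induction_on_min generalizing F a' with
  | empty => rw [union_empty]
  | insert m L hmin ih =>
    have hmF : m ∉ F := disjoint_right.1 hFL (mem_insert_self m L)
    have hnd : ∀ k, Ed k m → k ∈ F := fun k hk =>
      (hL m (mem_insert_self m L) k hk).resolve_right fun hkL =>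
        (mem_insert.1 hkL).elim (fun h => (hEd m k hk).ne h)
          fun h => (hmin k h).not_gt (hEd m k hk)
    have hunion : insert m F ∪ L = F ∪ insert m L := by
      rw [insert_union, union_insert]
    have hsample : ∀ v, clampedExp Ed π (insert m F) s (Function.update a' m v) f =
        clampedExp Ed π (F ∪ insert m L) s a' f := by
      intro v
      rw [ih (a' := Function.update a' m v), hunion]
      · refine clampedExp_congr Ed π (Δ := {m}) (fun k hk => Function.update_of_ne hk v a')
          (fun j hj k hk (hkm : k = m) => ?_)
          (hf.mono fun k (hk : k ∉ insert m L) (hkm : k = m) => hk (hkm ▸ mem_insert_self m L)) s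
        rw [hkm] at hk
        exact hfree j (fun h => hj (mem_union_left _ h)) (fun h => hj (mem_union_right _ h)) m hk
          (mem_insert_self m L)
      · rw [disjoint_insert_left]
        exact ⟨fun h => (hmin m h).false, hFL.mono_right (subset_insert m L)⟩
      · intro j hj hjL k hk hkL
        exact hfree j (fun h => hj (mem_insert_of_mem h))
          (fun h => (mem_insert.1 h).elim (fun h => hj (h ▸ mem_insert_self m F)) hjL)
          k hk (mem_insert_of_mem hkL)
      · intro j hj k hk
        have := hL j (mem_insert_of_mem hj) k hk
        rwa [← mem_union, ← hunion, mem_union] at this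
      · exact hf.mono fun k (hk : k ∉ insert m L) hkL => hk (mem_insert_of_mem hkL)
    rw [clampedExp_eq_sum_insert Ed π hmF hnd]
    simp only [hsample, ← sum_mul, (hπ m s _).2, one_mul]

theorem clampedExp_eq_of_dependsOn (hπ : IsPolicy Ed π) (hEd : ∀ i j : Fin n, Ed j i → j < i)
    {F : Finset (Fin n)} {f : (∀ i, A i) → ℝ} (hf : DependsOn f F) (s : St) (a' : ∀ i, A i) :
    clampedExp Ed π F s a' f = f a' := by
  rw [clampedExp_eq_clampedExp_union Ed π hπ hEd (L := Fᶜ) disjoint_compl_right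
    (fun j hj hj' => absurd (mem_compl.2 hj) hj')
    (fun j _ k _ => (em (k ∈ F)).imp_right mem_compl.2)
    (hf.mono fun k hk => by simpa using hk), union_compl, clampedExp_univ]

end ClampedExpectation

section Bellman

variable {n : ℕ} {St : Type*} [Fintype St] {A : Fin n → Type*}
  {P : St → (∀ i, A i) → St → ℝ} {r : St → (∀ i, A i) → ℝ} {γ : ℝ}

theorem abs_QV_sub_QV_le (hP0 : ∀ s a s', 0 ≤ P s a s') (hP1 : ∀ s a, ∑ s', P s a s' = 1)
    (hγ0 : 0 ≤ γ) (V W : St → ℝ) (s : St) (a : ∀ i, A i) :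
    |QV P r γ V s a - QV P r γ W s a| ≤ γ * ‖V - W‖ := by
  have hdiff : QV P r γ V s a - QV P r γ W s a = γ * ∑ s', P s a s' * (V - W) s' := by
    simp only [QV, Pi.sub_apply, mul_sub, sum_sub_distrib]
    ring
  rw [hdiff, abs_mul, abs_of_nonneg hγ0]
  gcongr
  calc |∑ s', P s a s' * (V - W) s'|
      ≤ ∑ s', P s a s' * ‖V - W‖ := by
        refine (abs_sum_le_sum_abs _ _).trans (sum_le_sum fun s' _ => ?_)
        rw [abs_mul, abs_of_nonneg (hP0 s a s')]
        exact mul_le_mul_of_nonneg_left (norm_le_pi_norm (V - W) s') (hP0 s a s')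
    _ = ‖V - W‖ := by rw [← sum_mul, hP1, one_mul]

theorem abs_ciSup_sub_ciSup_le {ι : Type*} [Finite ι] [Nonempty ι] {f g : ι → ℝ} {c : ℝ}
    (h : ∀ i, |f i - g i| ≤ c) : |(⨆ i, f i) - ⨆ i, g i| ≤ c := by
  rw [abs_sub_le_iff, sub_le_iff_le_add, sub_le_iff_le_add]
  constructor
  · exact ciSup_le fun i => (sub_le_iff_le_add.1 (abs_sub_le_iff.1 (h i)).1).trans
      (add_le_add_right (le_ciSup (Set.finite_range g).bddAbove i) c)
  · exact ciSup_le fun i => (sub_le_iff_le_add.1 (abs_sub_le_iff.1 (h i)).2).trans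
      (add_le_add_right (le_ciSup (Set.finite_range f).bddAbove i) c)

theorem eq_of_bellmanOptimality [∀ i, Fintype (A i)] [∀ i, Nonempty (A i)]
    (hP0 : ∀ s a s', 0 ≤ P s a s') (hP1 : ∀ s a, ∑ s', P s a s' = 1) (hγ0 : 0 ≤ γ) (hγ1 : γ < 1)
    {V W : St → ℝ} (hV : ∀ s, V s = ⨆ a, QV P r γ V s a) (hW : ∀ s, W s = ⨆ a, QV P r γ W s a) :
    V = W := by
  have hcontr : ‖V - W‖ ≤ γ * ‖V - W‖ := by
    refine (pi_norm_le_iff_of_nonneg (by positivity)).2 fun s => ?_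
    rw [Pi.sub_apply, Real.norm_eq_abs, hV s, hW s]
    exact abs_ciSup_sub_ciSup_le fun a => abs_QV_sub_QV_le hP0 hP1 hγ0 V W s a
  have hzero : ‖V - W‖ = 0 := by nlinarith [norm_nonneg (V - W)]
  exact sub_eq_zero.1 (norm_eq_zero.1 hzero)

end Bellman

section CoordinationGraph

variable {n : ℕ} {St : Type*} {A : Fin n → Type*}

def agentsFrom (t : ℕ) : Finset (Fin n) :=
  univ.filter fun j => t ≤ j.val

@[simp]
lemma mem_agentsFrom {t : ℕ} {j : Fin n} : j ∈ agentsFrom t ↔ t ≤ j.val := by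
  simp [agentsFrom]

lemma agentsFrom_zero : agentsFrom (n := n) 0 = univ := by
  ext
  simp

lemma agentsFrom_self : agentsFrom (n := n) n = ∅ := by
  ext j
  simp [j.isLt]

lemma insert_compl_agentsFrom (T : Fin n) :
    insert T (agentsFrom T.val)ᶜ = (agentsFrom (T.val + 1))ᶜ := by
  ext k
  simp only [mem_insert, mem_compl, mem_agentsFrom, not_le, Fin.ext_iff]
  omega

variable {Ed : Fin n → Fin n → Prop} {Gc : SimpleGraph (Fin n)}

lemma inNbr_of_adj (hNd : ∀ k : Fin n, {j : Fin n | Ed j k} = ncSet Gc {j : Fin n | k ≤ j})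
    {T i j : Fin n} (hi : i < T) (hj : T ≤ j) (hadj : Gc.Adj i j) : Ed i T := by
  have hmem : i ∈ ncSet Gc {j | T ≤ j} := ⟨Set.mem_biUnion hj hadj.symm, not_le.2 hi⟩
  rwa [← hNd T] at hmem

lemma inNbr_of_inNbr (hNd : ∀ k : Fin n, {j : Fin n | Ed j k} = ncSet Gc {j : Fin n | k ≤ j})
    {T j k : Fin n} (hk : Ed k j) (hj : T ≤ j) (hkT : k < T) : Ed k T := by
  have hmem : k ∈ ncSet Gc {p | j ≤ p} := by
    rw [← hNd j]
    exact hk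
  obtain ⟨p, hp, hadj⟩ := Set.mem_iUnion₂.1 hmem.1
  exact inNbr_of_adj hNd hkT (hj.trans hp) hadj.symm

variable (q : (i : Fin n) → (j : Fin n) → St → A i → A j → ℝ)

/-- For `q i j` supported on `i < j`: the edges with an endpoint `≥ t`. -/
def upperEdgeSum (t : ℕ) (s : St) (a : ∀ i, A i) : ℝ :=
  ∑ i, ∑ j ∈ agentsFrom t, q i j s (a i) (a j)

/-- For `q i j` supported on `i < j`: the edges with both endpoints `< t`. -/
def lowerEdgeSum (t : ℕ) (s : St) (a : ∀ i, A i) : ℝ :=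
  ∑ i, ∑ j ∈ (agentsFrom t)ᶜ, q i j s (a i) (a j)

lemma upperEdgeSum_add_lowerEdgeSum (t : ℕ) (s : St) (a : ∀ i, A i) :
    upperEdgeSum q t s a + lowerEdgeSum q t s a = ∑ i, ∑ j, q i j s (a i) (a j) := by
  simp only [upperEdgeSum, lowerEdgeSum, ← sum_add_distrib, sum_add_sum_compl]

lemma upperEdgeSum_zero (s : St) (a : ∀ i, A i) :
    upperEdgeSum q 0 s a = ∑ i, ∑ j, q i j s (a i) (a j) := by
  simp only [upperEdgeSum, agentsFrom_zero]

lemma dependsOn_lowerEdgeSum (hq : ∀ i j, ¬i < j → ∀ s ai aj, q i j s ai aj = 0) (t : ℕ)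
    (s : St) : DependsOn (lowerEdgeSum q t s) {k | k.val < t} := by
  intro x y hxy
  refine sum_congr rfl fun i _ => sum_congr rfl fun j hj => ?_
  have hjt : j.val < t := by simpa using hj
  by_cases hij : i < j
  · rw [hxy i ((Fin.lt_def.1 hij).trans hjt), hxy j hjt]
  · simp only [hq i j hij]

lemma dependsOn_upperEdgeSum
    (hNd : ∀ k : Fin n, {j : Fin n | Ed j k} = ncSet Gc {j : Fin n | k ≤ j})
    (hq0 : ∀ i j, ¬(i < j ∧ Gc.Adj i j) → ∀ s ai aj, q i j s ai aj = 0) (T : Fin n) (s : St) :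
    DependsOn (upperEdgeSum q T.val s) {k | T ≤ k ∨ Ed k T} := by
  intro x y hxy
  refine sum_congr rfl fun i _ => sum_congr rfl fun j hj => ?_
  have hjT : T ≤ j := Fin.le_def.2 (mem_agentsFrom.1 hj)
  by_cases hij : i < j ∧ Gc.Adj i j
  · have hi : T ≤ i ∨ Ed i T :=
      (le_or_gt T i).imp_right fun hiT => inNbr_of_adj hNd hiT hjT hij.2
    rw [hxy i hi, hxy j (Or.inl hjT)]
  · simp only [hq0 i j hij]

variable [∀ i, Fintype (A i)] [DecidableRel Ed]
  (π : (i : Fin n) → St → ((j : {j : Fin n // Ed j i}) → A j.1) → A i → ℝ)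

theorem clampedExp_upperEdgeSum_union (hπ : IsPolicy Ed π) (hEd : ∀ i j : Fin n, Ed j i → j < i)
    (hNd : ∀ k : Fin n, {j : Fin n | Ed j k} = ncSet Gc {j : Fin n | k ≤ j})
    (hq0 : ∀ i j, ¬(i < j ∧ Gc.Adj i j) → ∀ s ai aj, q i j s ai aj = 0)
    {T : Fin n} {F : Finset (Fin n)} (hF : ∀ k, Ed k T → k ∈ F) (s : St) (a' : ∀ i, A i) :
    clampedExp Ed π F s a' (upperEdgeSum q T.val s) =
      clampedExp Ed π (F ∪ (agentsFrom T.val)ᶜ) s a' (upperEdgeSum q T.val s) := by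
  rw [← union_sdiff_self_eq_union]
  refine clampedExp_eq_clampedExp_union Ed π hπ hEd disjoint_sdiff ?_ ?_ ?_ s a'
  · intro j hjF hjL k hk hkL
    simp only [mem_sdiff, mem_compl, mem_agentsFrom, not_le] at hjL hkL
    have hTj : T ≤ j := Fin.le_def.2 (not_lt.1 fun h => hjL ⟨h, hjF⟩)
    exact hkL.2 (hF k (inNbr_of_inNbr hNd hk hTj (Fin.lt_def.2 hkL.1)))
  · intro j hj k hk
    simp only [mem_sdiff, mem_compl, mem_agentsFrom, not_le] at hj ⊢
    have hkj := Fin.lt_def.1 (hEd j k hk)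
    by_cases hkF : k ∈ F
    · exact Or.inl hkF
    · exact Or.inr ⟨by omega, hkF⟩
  · refine (dependsOn_upperEdgeSum q hNd hq0 T s).mono fun k hk hkL => ?_
    simp only [mem_sdiff, mem_compl, mem_agentsFrom, not_le] at hkL
    rcases hk with hk | hk
    · exact absurd (Fin.le_def.1 hk) (not_le.2 hkL.1)
    · exact hkL.2 (hF k hk)

theorem clampedExp_lowerEdgeSum_union (hπ : IsPolicy Ed π) (hEd : ∀ i j : Fin n, Ed j i → j < i)
    (hNd : ∀ k : Fin n, {j : Fin n | Ed j k} = ncSet Gc {j : Fin n | k ≤ j})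
    (hq : ∀ i j, ¬i < j → ∀ s ai aj, q i j s ai aj = 0)
    {T : Fin n} {F : Finset (Fin n)} (hF : ∀ k, Ed k T → k ∈ F) (s : St) (a' : ∀ i, A i) :
    clampedExp Ed π F s a' (lowerEdgeSum q T.val s) =
      clampedExp Ed π (F ∪ agentsFrom T.val) s a' (lowerEdgeSum q T.val s) := by
  rw [← union_sdiff_self_eq_union]
  refine clampedExp_eq_clampedExp_union Ed π hπ hEd disjoint_sdiff ?_ ?_ ?_ s a'
  · intro j hjF hjL k hk hkL
    simp only [mem_sdiff, mem_agentsFrom] at hjL hkL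
    have hkj := Fin.lt_def.1 (hEd j k hk)
    have hjT : j.val < T.val := not_le.1 fun h => hjL ⟨h, hjF⟩
    omega
  · intro j hj k hk
    simp only [mem_sdiff, mem_agentsFrom] at hj ⊢
    by_cases hkF : k ∈ F
    · exact Or.inl hkF
    · refine Or.inr ⟨not_lt.1 fun hkT => hkF (hF k ?_), hkF⟩
      exact inNbr_of_inNbr hNd hk (Fin.le_def.2 hj.1) (Fin.lt_def.2 hkT)
  · refine (dependsOn_lowerEdgeSum q hq T.val s).mono fun k (hk : k.val < T.val) hkL => ?_
    simp only [mem_sdiff, mem_agentsFrom] at hkL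
    omega

theorem clampedExp_upperEdgeSum_of_succ [∀ i, Nonempty (A i)] (hπ : IsPolicy Ed π)
    (hEd : ∀ i j : Fin n, Ed j i → j < i) (hq : ∀ i j, ¬i < j → ∀ s ai aj, q i j s ai aj = 0)
    {t : ℕ} {s : St}
    (ih : ∀ a', clampedExp Ed π (agentsFrom (t + 1))ᶜ s a' (upperEdgeSum q (t + 1) s) =
      ⨆ b, upperEdgeSum q (t + 1) s (splice (t + 1) a' b))
    (a' : ∀ i, A i) :
    clampedExp Ed π (agentsFrom (t + 1))ᶜ s a' (upperEdgeSum q t s) =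
      ⨆ b, upperEdgeSum q t s (splice (t + 1) a' b) := by
  set g := fun a => lowerEdgeSum q (t + 1) s a - lowerEdgeSum q t s a with hg
  have hgdep : DependsOn g {k | k.val < t + 1} := fun x y hxy => by
    simp only [hg, dependsOn_lowerEdgeSum q hq (t + 1) s hxy,
      dependsOn_lowerEdgeSum q hq t s fun k (hk : k.val < t) => hxy k (Nat.lt_succ_of_lt hk)]
  have hsplit : upperEdgeSum q t s = fun a => g a + upperEdgeSum q (t + 1) s a := by
    funext a
    linarith [upperEdgeSum_add_lowerEdgeSum q t s a, upperEdgeSum_add_lowerEdgeSum q (t + 1) s a]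
  have hgclamped : DependsOn g (((agentsFrom (t + 1))ᶜ : Finset (Fin n)) : Set (Fin n)) :=
    hgdep.mono fun k (hk : k.val < t + 1) => by simpa using hk
  calc clampedExp Ed π (agentsFrom (t + 1))ᶜ s a' (upperEdgeSum q t s)
      = g a' + ⨆ b, upperEdgeSum q (t + 1) s (splice (t + 1) a' b) := by
        rw [hsplit, clampedExp_add, clampedExp_eq_of_dependsOn Ed π hπ hEd hgclamped, ih]
    _ = ⨆ b, g (splice (t + 1) a' b) + upperEdgeSum q (t + 1) s (splice (t + 1) a' b) := by
        rw [add_comm, ciSup_add (Set.finite_range _).bddAbove]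
        exact iSup_congr fun b => by rw [add_comm, hgdep fun k hk => splice_of_lt hk a' b]
    _ = ⨆ b, upperEdgeSum q t s (splice (t + 1) a' b) := by
        rw [hsplit]

theorem clampedExp_lowerEdgeSum_update (hEd : ∀ i j : Fin n, Ed j i → j < i)
    (hq : ∀ i j, ¬i < j → ∀ s ai aj, q i j s ai aj = 0) {T : Fin n} {F : Finset (Fin n)}
    (hF : agentsFrom T.val ⊆ F) (s : St) (a' : ∀ i, A i) (x : A T) :
    clampedExp Ed π F s (Function.update a' T x) (lowerEdgeSum q T.val s) =
      clampedExp Ed π F s a' (lowerEdgeSum q T.val s) := by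
  refine clampedExp_congr Ed π (Δ := {T}) (fun k hk => Function.update_of_ne hk x a')
    (fun j hj k hk (hkT : k = T) => hj (hF ?_)) ?_ s
  · have := Fin.lt_def.1 (hEd j k hk)
    rw [mem_agentsFrom, ← hkT]
    omega
  · exact (dependsOn_lowerEdgeSum q hq T.val s).mono
      fun k (hk : k.val < T.val) (hkT : k = T) => hk.ne (congrArg Fin.val hkT)

/-- Local optimality of agent `T`, once the expectation of the edges below `T` (the same on
both sides) is cancelled. -/
theorem clampedExp_upperEdgeSum_eq_iSup_update [∀ i, Nonempty (A i)] (hπ : IsPolicy Ed π)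
    (hEd : ∀ i j : Fin n, Ed j i → j < i)
    (hNd : ∀ k : Fin n, {j : Fin n | Ed j k} = ncSet Gc {j : Fin n | k ≤ j})
    (hq0 : ∀ i j, ¬(i < j ∧ Gc.Adj i j) → ∀ s ai aj, q i j s ai aj = 0)
    {Q : St → (∀ i, A i) → ℝ} (hQ : ∀ s a, Q s a = ∑ i, ∑ j, q i j s (a i) (a j))
    (hopt : GdLocallyOpt Ed π Q) (T : Fin n) (s : St) (a' : ∀ i, A i) :
    clampedExp Ed π (agentsFrom T.val)ᶜ s a' (upperEdgeSum q T.val s) =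
      ⨆ x, clampedExp Ed π (agentsFrom (T.val + 1))ᶜ s (Function.update a' T x)
        (upperEdgeSum q T.val s) := by
  have hq : ∀ i j, ¬i < j → ∀ s ai aj, q i j s ai aj = 0 := fun i j h => hq0 i j fun h' => h h'.1
  set D := univ.filter fun j => Ed j T with hD
  have hDT : ∀ k, Ed k T → k ∈ D := fun k hk => by simpa [hD] using hk
  have hDT' : ∀ k, Ed k T → k ∈ insert T D := fun k hk => mem_insert_of_mem (hDT k hk)
  have hfilter : univ.filter (fun j => Ed j T ∨ j = T) = insert T D := by
    ext j
    simp [hD, or_comm]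
  have hsplit : Q s = fun a => upperEdgeSum q T.val s a + lowerEdgeSum q T.val s a :=
    funext fun a => by rw [hQ, upperEdgeSum_add_lowerEdgeSum]
  have hupper : D ∪ (agentsFrom T.val)ᶜ = (agentsFrom T.val)ᶜ :=
    union_eq_right.2 fun k hk => mem_compl.2 fun h =>
      (mem_agentsFrom.1 h).not_gt (Fin.lt_def.1 (hEd T k (by simpa [hD] using hk)))
  have hupper' : insert T D ∪ (agentsFrom T.val)ᶜ = (agentsFrom (T.val + 1))ᶜ := by
    rw [insert_union, hupper, insert_compl_agentsFrom]
  have hlower : insert T D ∪ agentsFrom T.val = D ∪ agentsFrom T.val := by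
    rw [insert_union, insert_eq_of_mem (mem_union_right _ (by simp))]
  have hlhs : clampedExp Ed π D s a' (Q s) =
      clampedExp Ed π (agentsFrom T.val)ᶜ s a' (upperEdgeSum q T.val s) +
        clampedExp Ed π (D ∪ agentsFrom T.val) s a' (lowerEdgeSum q T.val s) := by
    rw [hsplit, clampedExp_add, clampedExp_upperEdgeSum_union q π hπ hEd hNd hq0 hDT, hupper,
      clampedExp_lowerEdgeSum_union q π hπ hEd hNd hq hDT]
  have hrhs : ∀ x, clampedExp Ed π (insert T D) s (Function.update a' T x) (Q s) =
      clampedExp Ed π (agentsFrom (T.val + 1))ᶜ s (Function.update a' T x)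
          (upperEdgeSum q T.val s) +
        clampedExp Ed π (D ∪ agentsFrom T.val) s a' (lowerEdgeSum q T.val s) := fun x => by
    rw [hsplit, clampedExp_add, clampedExp_upperEdgeSum_union q π hπ hEd hNd hq0 hDT', hupper',
      clampedExp_lowerEdgeSum_union q π hπ hEd hNd hq hDT', hlower,
      clampedExp_lowerEdgeSum_update q π hEd hq subset_union_right]
  have h := hopt T s a'
  rw [hfilter, hlhs] at h
  simp only [hrhs] at h
  rw [← ciSup_add (Set.finite_range _).bddAbove] at h
  exact add_right_cancel h

theorem clampedExp_upperEdgeSum_eq_iSup [∀ i, Nonempty (A i)] (hπ : IsPolicy Ed π)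
    (hEd : ∀ i j : Fin n, Ed j i → j < i)
    (hNd : ∀ k : Fin n, {j : Fin n | Ed j k} = ncSet Gc {j : Fin n | k ≤ j})
    (hq0 : ∀ i j, ¬(i < j ∧ Gc.Adj i j) → ∀ s ai aj, q i j s ai aj = 0)
    {Q : St → (∀ i, A i) → ℝ} (hQ : ∀ s a, Q s a = ∑ i, ∑ j, q i j s (a i) (a j))
    (hopt : GdLocallyOpt Ed π Q) (s : St) {t : ℕ} (ht : t ≤ n) :
    ∀ a', clampedExp Ed π (agentsFrom t)ᶜ s a' (upperEdgeSum q t s) =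
      ⨆ b, upperEdgeSum q t s (splice t a' b) := by
  induction ht using Nat.decreasingInduction with
  | self =>
    intro a'
    simp only [agentsFrom_self, compl_empty, clampedExp_univ, splice_self, ciSup_const]
  | of_succ t ht ih =>
    intro a'
    rw [clampedExp_upperEdgeSum_eq_iSup_update q π hπ hEd hNd hq0 hQ hopt ⟨t, ht⟩ s a']
    simp only [clampedExp_upperEdgeSum_of_succ q π hπ hEd
      (fun i j h => hq0 i j fun h' => h h'.1) ih]
    exact iSup_splice_succ_update ⟨t, ht⟩ a' _

theorem clampedExp_empty_eq_iSup [∀ i, Nonempty (A i)] (hπ : IsPolicy Ed π)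
    (hEd : ∀ i j : Fin n, Ed j i → j < i)
    (hNd : ∀ k : Fin n, {j : Fin n | Ed j k} = ncSet Gc {j : Fin n | k ≤ j})
    {Q : St → (∀ i, A i) → ℝ} (hCG : IsCG Gc Q) (hopt : GdLocallyOpt Ed π Q) (s : St)
    (a' : ∀ i, A i) :
    clampedExp Ed π ∅ s a' (Q s) = ⨆ a, Q s a := by
  obtain ⟨q, hq0, hQ⟩ := hCG
  have hupper : upperEdgeSum q 0 s = Q s := funext fun a => by rw [hQ, upperEdgeSum_zero]
  simpa only [agentsFrom_zero, compl_univ, hupper, splice_zero] using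
    clampedExp_upperEdgeSum_eq_iSup q π hπ hEd hNd hq0 hQ hopt s (Nat.zero_le n) a'

end CoordinationGraph

/-- Theorem: optimality of the ADG. In a finite Markov game, let `π` be a
stochastic action-dependent joint policy associated with an ADG (edge relation `Ed`,
topologically sorted), let `Vπ` be its value function (the fixed point of `T_π`, which
here is expressed via the clamped expectation with no coordinate clamped), suppose `π`
is `G_d`-locally optimal w.r.t. `Q^{Vπ}`, let `G_c` be a CG of `Q^{Vπ}`, and suppose
`N_d(i) = N_c(i^{[+]})` for every `i`. Then `π` is globally optimal: `Vπ = V*`, where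
`V*` is the fixed point of the Bellman optimality operator. -/
theorem stmt6 {n : ℕ} {St : Type*} [Fintype St] {A : Fin n → Type*}
    [∀ i, Fintype (A i)] [∀ i, Nonempty (A i)]
    (P : St → (∀ i, A i) → St → ℝ) (r : St → (∀ i, A i) → ℝ) (γ : ℝ)
    (hP0 : ∀ s a s', 0 ≤ P s a s') (hP1 : ∀ s a, ∑ s', P s a s' = 1)
    (hγ0 : 0 ≤ γ) (hγ1 : γ < 1)
    (Ed : Fin n → Fin n → Prop) [DecidableRel Ed]
    (hEd : ∀ i j : Fin n, Ed j i → j < i)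
    (π : (i : Fin n) → St → ((j : {j : Fin n // Ed j i}) → A j.1) → A i → ℝ)
    (hπ : IsPolicy Ed π)
    (Vπ : St → ℝ)
    (hVπ : ∀ (s : St) (a' : ∀ j, A j),
        Vπ s = clampedExp Ed π ∅ s a' (QV P r γ Vπ s))
    (hopt : GdLocallyOpt Ed π (QV P r γ Vπ))
    (Gc : SimpleGraph (Fin n))
    (hCG : IsCG Gc (QV P r γ Vπ))
    (hNd : ∀ k : Fin n, {j : Fin n | Ed j k} = ncSet Gc {j : Fin n | k ≤ j})
    (Vstar : St → ℝ)
    (hVstar : ∀ s, Vstar s = ⨆ a : ∀ i, A i, QV P r γ Vstar s a) :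
    Vπ = Vstar := by
  refine eq_of_bellmanOptimality hP0 hP1 hγ0 hγ1 (fun s => ?_) hVstar
  obtain ⟨a'⟩ : Nonempty (∀ i, A i) := inferInstance
  exact (hVπ s a').trans (clampedExp_empty_eq_iSup π hπ hEd hNd hCG hopt s a')
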